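/- arXiv:2310.07926 — 2 statements merged into one kernel-verified Lean document; each statement's English description precedes it below -/
import Mathlib

section
/- There is a universal constant B > 0 such that the following holds. Let K ≥ 2, let z ∈ 𝔻, and let ω = e^{2πi/K}. Then there exists a vector c = (c_0, …, c_{K−1}) ∈ ℂ^K such that z^k = Σ_{j=0}^{K−1} c_j (ω^j)^k for every k = 0, 1, …, K−1, and Σ_{j=0}^{K−1} |c_j| ≤ B · log K. Moreover one may take c_j = (1/K) Σ_{k=0}^{K−1} ω^{−jk} z^k = (1 − z^K)/(K(1 − ω^{−j} z)) when ω^{−j} z ≠ 1. -/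
open Finset

lemma jordan {r φ : ℝ} (hr : 1/2 ≤ r) (hr1 : r ≤ 1) (hφ : |φ| ≤ Real.pi) :
    |φ| / 3 ≤ ‖1 - (r:ℂ) * Complex.exp (φ * Complex.I)‖ := by
  have hcos : Real.cos φ ≤ 1 - 2 / Real.pi ^ 2 * φ ^ 2 := Real.cos_le_one_sub_mul_cos_sq hφ
  have h18 : (1:ℝ)/9 ≤ 2 / Real.pi ^ 2 := by
    rw [div_le_div_iff₀ (by norm_num) (by positivity)]
    nlinarith [Real.pi_lt_d2, Real.pi_pos]
  have hcos2 : φ^2/9 ≤ 1 - Real.cos φ := by nlinarith [sq_nonneg φ]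
  have hsq : (‖1 - (r:ℂ) * Complex.exp (φ * Complex.I)‖)^2
      = (1 - r * Real.cos φ)^2 + (r * Real.sin φ)^2 := by
    rw [Complex.sq_norm, Complex.normSq_apply]
    simp [Complex.exp_ofReal_mul_I_re, Complex.exp_ofReal_mul_I_im]
    ring
  have hs : Real.sin φ ^ 2 + Real.cos φ ^ 2 = 1 := Real.sin_sq_add_cos_sq φ
  have hcos1 : Real.cos φ ≤ 1 := Real.cos_le_one φ
  have key : (|φ|/3)^2 ≤ (‖1 - (r:ℂ) * Complex.exp (φ * Complex.I)‖)^2 := by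
    rw [hsq]
    have habs : |φ|^2 = φ^2 := sq_abs φ
    nlinarith [sq_nonneg (1-r), sq_nonneg (Real.sin φ)]
  nlinarith [norm_nonneg (1 - (r:ℂ) * Complex.exp (φ * Complex.I)), abs_nonneg φ]

lemma logmono {a b : ℕ} (h : a ≤ b) : Real.log a ≤ Real.log b := by
  rcases Nat.eq_zero_or_pos a with rfl | ha
  · simpa using Real.log_natCast_nonneg b
  · exact Real.log_le_log (by exact_mod_cast ha) (by exact_mod_cast h)

lemma harm_real (n : ℕ) : ∑ i ∈ Finset.range n, (1:ℝ)/((i:ℝ)+1) ≤ 1 + Real.log n := by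
  have h := harmonic_le_one_add_log n
  have h2 : ((harmonic n : ℚ) : ℝ) = ∑ i ∈ Finset.range n, (1:ℝ)/((i:ℝ)+1) := by
    rw [harmonic]; push_cast; simp [one_div]
  rw [h2] at h; exact_mod_cast h

lemma sum_inv_left (n : ℕ) (t : ℝ) (h : ∀ j : ℕ, j < n → (n:ℝ) - j ≤ |t - j| + 1) :
    ∑ j ∈ range n, 1/(|t - j| + 1) ≤ ∑ i ∈ range n, (1:ℝ)/((i:ℝ)+1) := by
  rw [← Finset.sum_range_reflect (fun i => (1:ℝ)/((i:ℝ)+1)) n]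
  apply Finset.sum_le_sum
  intro j hj
  simp only [mem_range] at hj
  have hc : ((n - 1 - j : ℕ) : ℝ) + 1 = (n:ℝ) - j := by
    have : n - 1 - j = n - (j+1) := by omega
    rw [this, Nat.cast_sub (by omega)]
    push_cast; ring
  rw [hc]
  apply one_div_le_one_div_of_le
  · have : (j:ℝ) < n := by exact_mod_cast hj
    linarith
  · exact h j hj

lemma sumA (K : ℕ) (hK : 1 ≤ K) (t : ℝ) :
    ∑ j ∈ range K, 1/(|t - (j:ℝ)| + 1) ≤ 3 + 2 * Real.log K := by
  have hround := abs_sub_round t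
  set m : ℤ := max (min (round t) ((K:ℤ)-1)) 0 with hm
  have hm0 : 0 ≤ m := le_max_right _ _
  have hmK : m ≤ (K:ℤ)-1 := max_le (min_le_right _ _) (by omega)
  set n : ℕ := m.toNat with hn
  have hnK : n < K := by omega
  have hnm : (n:ℝ) = (m:ℝ) := by exact_mod_cast Int.toNat_of_nonneg hm0
  have hkey : ∀ j : ℕ, j < K → |(j:ℝ) - n| ≤ |t - j| + 1 := by
    intro j hj
    have hj1 : (j:ℝ) ≤ (K:ℝ) - 1 := by
      have : (j:ℝ) + 1 ≤ K := by exact_mod_cast hj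
      linarith
    have hj0 : (0:ℝ) ≤ j := Nat.cast_nonneg j
    have habs1 : (j:ℝ) - t ≤ |t - j| := by rw [abs_sub_comm]; exact le_abs_self _
    have habs2 : t - (j:ℝ) ≤ |t - j| := le_abs_self _
    rw [hnm]
    by_cases h1 : round t < 0
    · have hm' : m = 0 := by
        have h2 : min (round t) ((K:ℤ)-1) ≤ 0 := le_trans (min_le_left _ _) (by omega)
        exact max_eq_right h2
      have hrt : ((round t : ℤ) : ℝ) ≤ -1 := by exact_mod_cast (by omega : round t ≤ -1)
      have ht : t ≤ -1/2 := by
        have := abs_le.mp hround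
        linarith [this.1]
      rw [hm']
      rw [abs_of_nonneg (by push_cast; linarith : (0:ℝ) ≤ (j:ℝ) - ((0:ℤ):ℝ))]
      push_cast
      linarith
    · by_cases h2 : (K:ℤ) - 1 < round t
      · have hm' : m = (K:ℤ) - 1 := by
          have : min (round t) ((K:ℤ)-1) = (K:ℤ)-1 := min_eq_right (by omega)
          rw [hm, this]; exact max_eq_left (by omega)
        have hrt : ((K:ℝ)) ≤ ((round t : ℤ):ℝ) := by exact_mod_cast (by omega : (K:ℤ) ≤ round t)
        have ht : (K:ℝ) - 1/2 ≤ t := by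
          have := abs_le.mp hround
          linarith [this.2]
        rw [hm']
        rw [abs_of_nonpos (by push_cast; linarith : (j:ℝ) - (((K:ℤ)-1 : ℤ):ℝ) ≤ 0)]
        push_cast
        linarith
      · have hm' : m = round t := by
          have : min (round t) ((K:ℤ)-1) = round t := min_eq_left (by omega)
          rw [hm, this]; exact max_eq_left (by omega)
        rw [hm']
        have htri : |(j:ℝ) - ((round t : ℤ):ℝ)| ≤ |(j:ℝ) - t| + |t - ((round t:ℤ):ℝ)| :=
          abs_sub_le _ _ _
        rw [abs_sub_comm t] at habs1
        have := abs_le.mp hround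
        rw [abs_sub_comm (j:ℝ) t] at htri
        linarith [le_abs_self ((j:ℝ) - t), abs_nonneg (t - (j:ℝ)), htri, hround]
  -- decompose
  have hdecomp : ∑ j ∈ range K, 1/(|t - (j:ℝ)| + 1)
      = ∑ j ∈ range n, 1/(|t - (j:ℝ)| + 1) + 1/(|t - (n:ℝ)| + 1)
        + ∑ j ∈ Ico (n+1) K, 1/(|t - (j:ℝ)| + 1) := by
    rw [range_eq_Ico, ← Finset.sum_Ico_consecutive _ (Nat.zero_le (n+1)) (by omega : n+1 ≤ K),
      ← range_eq_Ico]
    simp [← range_eq_Ico, Finset.sum_range_succ]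
  rw [hdecomp]
  have hb1 : ∑ j ∈ range n, 1/(|t - (j:ℝ)| + 1) ≤ 1 + Real.log n := by
    refine le_trans (sum_inv_left n t ?_) (harm_real n)
    intro j hj
    have := hkey j (lt_trans hj hnK)
    have hjn : |(j:ℝ) - n| = (n:ℝ) - j := by
      rw [abs_of_nonpos]
      · ring
      · have : (j:ℝ) < n := by exact_mod_cast hj
        linarith
    linarith [hjn ▸ this]
  have hb2 : 1/(|t - (n:ℝ)| + 1) ≤ 1 := by
    rw [div_le_one (by positivity)]
    linarith [abs_nonneg (t - (n:ℝ))]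
  have hb3 : ∑ j ∈ Ico (n+1) K, 1/(|t - (j:ℝ)| + 1) ≤ 1 + Real.log (K - (n+1) : ℕ) := by
    rw [Finset.sum_Ico_eq_sum_range]
    refine le_trans (Finset.sum_le_sum ?_) (harm_real (K - (n+1)))
    intro i hi
    simp only [mem_range] at hi
    have hjK : n + 1 + i < K := by omega
    have hk := hkey (n+1+i) hjK
    have : |((n+1+i : ℕ):ℝ) - n| = (i:ℝ) + 1 := by
      push_cast
      rw [abs_of_nonneg (by linarith)]
      ring
    rw [this] at hk
    apply one_div_le_one_div_of_le
    · positivity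
    · exact hk
  have hl1 : Real.log n ≤ Real.log K := logmono (le_of_lt hnK)
  have hl2 : Real.log (K - (n+1) : ℕ) ≤ Real.log K := logmono (by omega)
  linarith

set_option maxHeartbeats 1000000 in
/-- Lemma 3.3 (interpolation at roots of unity with `ℓ¹` bound `O(log K)`): there is a
universal `B > 0` such that for all `K ≥ 2` and `z ∈ 𝔻`, with `ω = e^{2πi/K}`, there is
`c ∈ ℂ^K` with `z^k = Σ_j c_j (ω^j)^k` for `0 ≤ k ≤ K−1` and `Σ_j |c_j| ≤ B log K`;
moreover one may take `c_j = (1/K) Σ_k ω^{−jk} z^k`, which equals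
`(1 − z^K) / (K (1 − ω^{−j} z))` whenever `ω^{−j} z ≠ 1`. -/
theorem stmt11 :
    ∃ B : ℝ, 0 < B ∧
      ∀ (K : ℕ), 2 ≤ K → ∀ z : ℂ, ‖z‖ ≤ 1 →
      ∃ c : Fin K → ℂ,
        (∀ k : Fin K, z ^ (k : ℕ) =
          ∑ j, c j * (Complex.exp (2 * Real.pi * Complex.I / K) ^ (j : ℕ)) ^ (k : ℕ)) ∧
        (∑ j, ‖c j‖) ≤ B * Real.log K ∧
        (∀ j : Fin K, c j = (1 / (K : ℂ)) *
          ∑ k : Fin K,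
            Complex.exp (-(2 * Real.pi * Complex.I * ((j : ℕ) : ℂ) * ((k : ℕ) : ℂ)) / K) *
              z ^ (k : ℕ)) ∧
        (∀ j : Fin K,
          Complex.exp (-(2 * Real.pi * Complex.I * ((j : ℕ) : ℂ)) / K) * z ≠ 1 →
          c j = (1 - z ^ K) /
            ((K : ℂ) * (1 - Complex.exp (-(2 * Real.pi * Complex.I * ((j : ℕ) : ℂ)) / K) * z))) := by
  refine ⟨30, by norm_num, ?_⟩
  intro K hK z hz
  have hKne : (K:ℂ) ≠ 0 := Nat.cast_ne_zero.mpr (by omega)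
  set ζ : ℂ := Complex.exp (2 * Real.pi * Complex.I / K) with hζ
  set w : ℕ → ℂ := fun j => Complex.exp (-(2 * Real.pi * Complex.I * j) / K) * z with hw
  set c : Fin K → ℂ := fun j => (1 / (K : ℂ)) *
      ∑ k : Fin K, Complex.exp (-(2 * Real.pi * Complex.I * ((j:ℕ):ℂ) * ((k:ℕ):ℂ)) / K) * z ^ (k:ℕ)
    with hc
  have hterm : ∀ j k : ℕ,
      Complex.exp (-(2 * Real.pi * Complex.I * (j:ℂ) * (k:ℂ)) / K) * z ^ k = (w j)^k := by
    intro j k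
    rw [hw]
    simp only [mul_pow]
    congr 1
    rw [← Complex.exp_nat_mul]
    congr 1
    ring
  have hcrange : ∀ j : Fin K, c j = (1/(K:ℂ)) *
      ∑ k' ∈ range K, Complex.exp (-(2 * Real.pi * Complex.I * ((j:ℕ):ℂ) * (k':ℂ)) / K) * z ^ k' := by
    intro j
    simp only [hc]
    congr 1
    rw [← Fin.sum_univ_eq_sum_range (fun k' =>
      Complex.exp (-(2 * Real.pi * Complex.I * ((j:ℕ):ℂ) * (k':ℂ)) / K) * z ^ k')]
  have hcw : ∀ j : Fin K, c j = (1/(K:ℂ)) * ∑ k ∈ range K, (w (j:ℕ))^k := by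
    intro j
    rw [hcrange j]
    congr 1
    exact Finset.sum_congr rfl fun k _ => hterm j k
  have hwK : ∀ j : ℕ, (w j)^K = z^K := by
    intro j
    rw [hw]
    simp only [mul_pow]
    have h1 : Complex.exp (-(2 * Real.pi * Complex.I * (j:ℂ)) / K) ^ K
        = ((Complex.exp (2 * Real.pi * Complex.I))^j)⁻¹ := by
      rw [← Complex.exp_nat_mul, ← Complex.exp_nat_mul, ← Complex.exp_neg]
      congr 1
      field_simp
    rw [h1, Complex.exp_two_pi_mul_I, one_pow, inv_one, one_mul]
  have hgeom : ∀ j : ℕ, w j ≠ 1 → ∑ k ∈ range K, (w j)^k = (1 - z^K)/(1 - w j) := by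
    intro j hj
    rw [geom_sum_eq hj, hwK j, ← neg_div_neg_eq]
    ring_nf
  refine ⟨c, ?_, ?_, fun j => rfl, ?_⟩
  · -- interpolation
    intro k
    have hζprim : IsPrimitiveRoot ζ K := Complex.isPrimitiveRoot_exp K (by omega)
    have hζne : ∀ m : ℕ, ζ ^ m ≠ 0 := fun m => pow_ne_zero m (Complex.exp_ne_zero _)
    have hterm2 : ∀ (j k' : ℕ),
        Complex.exp (-(2 * Real.pi * Complex.I * (j:ℂ) * (k':ℂ)) / K) * (ζ ^ j) ^ (k:ℕ)
          = (ζ ^ (k:ℕ) * (ζ ^ k')⁻¹) ^ j := by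
      intro j k'
      have e1 : Complex.exp (-(2 * Real.pi * Complex.I * (j:ℂ) * (k':ℂ)) / K)
          = (ζ ^ (j * k'))⁻¹ := by
        rw [hζ, ← Complex.exp_nat_mul, ← Complex.exp_neg]
        congr 1
        push_cast
        ring
      rw [e1, ← pow_mul, mul_pow, inv_pow, ← pow_mul, ← pow_mul,
        mul_comm (k':ℕ) j, mul_comm ((k:ℕ)) j]
      exact mul_comm _ _
    have hswap : ∑ j : Fin K, c j * (ζ ^ (j:ℕ)) ^ (k:ℕ)
        = (1/(K:ℂ)) * ∑ k' ∈ range K,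
            (∑ j ∈ range K, (ζ ^ (k:ℕ) * (ζ ^ k')⁻¹) ^ j) * z ^ k' := by
      calc ∑ j : Fin K, c j * (ζ ^ (j:ℕ)) ^ (k:ℕ)
          = ∑ j ∈ range K, ((1/(K:ℂ)) *
              ∑ k' ∈ range K, (ζ ^ (k:ℕ) * (ζ ^ k')⁻¹) ^ j * z ^ k') := by
            rw [← Fin.sum_univ_eq_sum_range (fun j => (1/(K:ℂ)) *
              ∑ k' ∈ range K, (ζ ^ (k:ℕ) * (ζ ^ k')⁻¹) ^ j * z ^ k')]
            refine Finset.sum_congr rfl fun j _ => ?_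
            rw [hcrange j, mul_assoc, Finset.sum_mul]
            congr 1
            refine Finset.sum_congr rfl fun k' _ => ?_
            rw [mul_right_comm, hterm2 (j:ℕ) k']
        _ = (1/(K:ℂ)) * ∑ j ∈ range K,
              ∑ k' ∈ range K, (ζ ^ (k:ℕ) * (ζ ^ k')⁻¹) ^ j * z ^ k' := by
            rw [Finset.mul_sum]
        _ = (1/(K:ℂ)) * ∑ k' ∈ range K,
              (∑ j ∈ range K, (ζ ^ (k:ℕ) * (ζ ^ k')⁻¹) ^ j) * z ^ k' := by
            rw [Finset.sum_comm]
            congr 1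
            exact Finset.sum_congr rfl fun k' _ => (Finset.sum_mul _ _ _).symm
    rw [hswap, Finset.sum_eq_single (k:ℕ)]
    · rw [mul_inv_cancel₀ (hζne (k:ℕ))]
      simp only [one_pow, Finset.sum_const, Finset.card_range, nsmul_eq_mul, mul_one]
      field_simp
    · intro b hb hbk
      have hη1 : ζ ^ (k:ℕ) * (ζ ^ b)⁻¹ ≠ 1 := by
        intro h
        have : ζ ^ (k:ℕ) = ζ ^ b := by
          rwa [mul_inv_eq_one₀ (hζne b)] at h
        exact hbk (hζprim.pow_inj k.isLt (mem_range.mp hb) this).symm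
      have hηK : (ζ ^ (k:ℕ) * (ζ ^ b)⁻¹) ^ K = 1 := by
        rw [mul_pow, inv_pow, ← pow_mul, ← pow_mul, mul_comm ((k:ℕ)) K, mul_comm b K,
          pow_mul, pow_mul, hζprim.pow_eq_one, one_pow, one_pow, inv_one, mul_one]
      rw [geom_sum_eq hη1, hηK, sub_self, zero_div, zero_mul]
    · intro h
      exact absurd (mem_range.mpr k.isLt) h
  · -- l1 bound
    have hKpos : (0:ℝ) < K := by positivity
    have hlog2 : (0.69:ℝ) ≤ Real.log K := by
      have h1 : Real.log 2 ≤ Real.log K := by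
        have := logmono (show 2 ≤ K from hK); simpa using this
      linarith [Real.log_two_gt_d9]
    have hwabs : ∀ j : ℕ, ‖w j‖ = ‖z‖ := by
      intro j
      rw [hw]
      simp only []
      rw [norm_mul]
      have h : (-(2 * Real.pi * Complex.I * (j:ℂ)) / K) = ((-(2 * Real.pi * j) / K : ℝ) : ℂ) * Complex.I := by
        push_cast; ring
      rw [h, Complex.norm_exp_ofReal_mul_I, one_mul]
    have habs1 : ∀ j : Fin K, ‖c j‖ ≤ 1 := by
      intro j
      rw [hcw j, norm_mul, norm_div, norm_one, Complex.norm_natCast]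
      have h2 : ‖∑ k ∈ range K, (w (j:ℕ))^k‖ ≤ K := by
        refine le_trans (norm_sum_le _ _) ?_
        have : ∀ k ∈ range K, ‖(w (j:ℕ))^k‖ ≤ 1 := by
          intro k _
          rw [norm_pow, hwabs]
          exact pow_le_one₀ (norm_nonneg z) hz
        calc ∑ k ∈ range K, ‖(w (j:ℕ))^k‖ ≤ ∑ k ∈ range K, (1:ℝ) :=
              Finset.sum_le_sum this
          _ = K := by simp
      calc 1/(K:ℝ) * ‖∑ k ∈ range K, (w (j:ℕ))^k‖ ≤ 1/(K:ℝ) * K := by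
            gcongr
        _ = 1 := by field_simp
    have habs2 : ∀ j : Fin K, w (j:ℕ) ≠ 1 →
        ‖c j‖ ≤ 2 / ((K:ℝ) * ‖1 - w (j:ℕ)‖) := by
      intro j hj
      have hBpos : 0 < ‖1 - w (j:ℕ)‖ :=
        norm_pos_iff.mpr (sub_ne_zero.mpr (Ne.symm hj))
      rw [hcw j, hgeom _ hj, norm_mul, norm_div, norm_div, norm_one, Complex.norm_natCast]
      have hnum : ‖1 - z^K‖ ≤ 2 := by
        calc ‖1 - z^K‖ ≤ ‖(1:ℂ)‖ + ‖z^K‖ := by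
              exact norm_sub_le _ _
          _ ≤ 2 := by
              rw [norm_one, norm_pow]
              have := pow_le_one₀ (norm_nonneg z) hz (n := K)
              linarith
      have heq : 1/(K:ℝ) * (‖1 - z^K‖ / ‖1 - w (j:ℕ)‖)
          = ‖1 - z^K‖ / ((K:ℝ) * ‖1 - w (j:ℕ)‖) := by ring
      rw [heq]
      gcongr
    by_cases hr : 1/2 ≤ ‖z‖
    · -- main case
      set r := ‖z‖ with hrdef
      set θ := Complex.arg z with hθdef
      set t : ℝ := θ * K / (2 * Real.pi) with htdef
      set t' : ℝ := t + K with ht'def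
      have hθmem := Complex.arg_mem_Ioc z
      have hπ := Real.pi_pos
      have hπ3 := Real.pi_gt_three
      have hkeyj : ∀ j : Fin K, ‖c j‖
          ≤ 2/(|t - (j:ℕ)| + 1) + 2/(|t' - (j:ℕ)| + 1) := by
        intro j
        set u : ℝ := min (|t - (j:ℕ)|) (|t' - (j:ℕ)|) with hu
        have hu0 : 0 ≤ u := le_min (abs_nonneg _) (abs_nonneg _)
        set φ : ℝ := θ - 2*Real.pi*(j:ℕ)/K with hφdef
        have hwφ : w (j:ℕ) = ((r:ℝ):ℂ) * Complex.exp ((φ:ℝ) * Complex.I) := by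
          calc w (j:ℕ) = Complex.exp (-(2 * Real.pi * Complex.I * ((j:ℕ):ℂ)) / K)
                * (((r:ℝ):ℂ) * Complex.exp (((θ:ℝ):ℂ) * Complex.I)) := by
                rw [hw, hrdef, hθdef, Complex.norm_mul_exp_arg_mul_I]
            _ = ((r:ℝ):ℂ) * (Complex.exp (-(2 * Real.pi * Complex.I * ((j:ℕ):ℂ)) / K)
                * Complex.exp (((θ:ℝ):ℂ) * Complex.I)) := by ring
            _ = ((r:ℝ):ℂ) * Complex.exp ((φ:ℝ) * Complex.I) := by
                rw [← Complex.exp_add]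
                congr 1
                rw [hφdef]
                push_cast
                ring
        have hφt : φ = 2*Real.pi/K * (t - (j:ℕ)) := by
          rw [hφdef, htdef]
          field_simp
        have hφt' : φ + 2*Real.pi = 2*Real.pi/K * (t' - (j:ℕ)) := by
          rw [hφdef, ht'def, htdef]
          field_simp
          ring
        have hjlt : ((j:ℕ):ℝ) < K := by exact_mod_cast j.isLt
        have hj0 : (0:ℝ) ≤ ((j:ℕ):ℝ) := Nat.cast_nonneg _
        have hφub : φ ≤ Real.pi := by
          rw [hφdef]
          have : 0 ≤ 2*Real.pi*(j:ℕ)/K := by positivity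
          linarith [hθmem.2]
        have hφlb : -(3*Real.pi) < φ := by
          rw [hφdef]
          have h1 : 2*Real.pi*(j:ℕ)/K < 2*Real.pi := by
            rw [div_lt_iff₀ hKpos]
            nlinarith
          linarith [hθmem.1]
        -- lower bound on |1 - w j|
        have hlow : 2*Real.pi/(3*(K:ℝ)) * u ≤ ‖1 - w (j:ℕ)‖ := by
          by_cases hcase : -Real.pi ≤ φ
          · have hj1 := jordan hr hz (abs_le.mpr ⟨by linarith, hφub⟩)
            rw [← hwφ] at hj1
            have habs : |φ| = 2*Real.pi/K * |t - (j:ℕ)| := by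
              rw [hφt, abs_mul, abs_of_pos (by positivity)]
            calc 2*Real.pi/(3*(K:ℝ)) * u ≤ 2*Real.pi/(3*(K:ℝ)) * |t - (j:ℕ)| :=
                  mul_le_mul_of_nonneg_left (min_le_left _ _) (by positivity)
              _ = |φ|/3 := by rw [habs]; ring
              _ ≤ _ := hj1
          · push_neg at hcase
            have hψmem : |φ + 2*Real.pi| ≤ Real.pi := abs_le.mpr ⟨by linarith, by linarith⟩
            have hexp : Complex.exp ((φ:ℝ) * Complex.I)
                = Complex.exp (((φ + 2*Real.pi : ℝ):ℂ) * Complex.I) := by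
              rw [show (((φ + 2*Real.pi : ℝ)):ℂ) * Complex.I
                  = ((φ:ℝ):ℂ) * Complex.I + 2*Real.pi*Complex.I by push_cast; ring]
              rw [Complex.exp_add, Complex.exp_two_pi_mul_I, mul_one]
            have hj1 := jordan hr hz hψmem
            rw [← hexp, ← hwφ] at hj1
            have habs : |φ + 2*Real.pi| = 2*Real.pi/K * |t' - (j:ℕ)| := by
              rw [hφt', abs_mul, abs_of_pos (by positivity)]
            calc 2*Real.pi/(3*(K:ℝ)) * u ≤ 2*Real.pi/(3*(K:ℝ)) * |t' - (j:ℕ)| :=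
                  mul_le_mul_of_nonneg_left (min_le_right _ _) (by positivity)
              _ = |φ + 2*Real.pi|/3 := by rw [habs]; ring
              _ ≤ _ := hj1
        -- conclude per-j bound
        have hstep : ‖c j‖ ≤ 2/(u + 1) := by
          by_cases hu1 : u ≤ 1
          · refine le_trans (habs1 j) ?_
            rw [le_div_iff₀ (by positivity)]
            linarith
          · push_neg at hu1
            have hBpos : 0 < ‖1 - w (j:ℕ)‖ := by
              calc (0:ℝ) < 2*Real.pi/(3*(K:ℝ)) * u := by positivity
                _ ≤ _ := hlow
            have hwne : w (j:ℕ) ≠ 1 := by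
              intro h
              rw [h, sub_self, norm_zero] at hBpos
              exact lt_irrefl 0 hBpos
            refine le_trans (habs2 j hwne) ?_
            have hKB : 2*u ≤ (K:ℝ) * ‖1 - w (j:ℕ)‖ := by
              have h1 : (K:ℝ) * (2*Real.pi/(3*(K:ℝ)) * u) = 2*Real.pi/3 * u := by
                field_simp
              nlinarith [mul_le_mul_of_nonneg_left hlow (le_of_lt hKpos)]
            calc 2 / ((K:ℝ) * ‖1 - w (j:ℕ)‖) ≤ 2/(2*u) := by
                  apply div_le_div_of_nonneg_left (by norm_num) (by linarith) hKB
              _ ≤ 2/(u+1) := by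
                  apply div_le_div_of_nonneg_left (by norm_num) (by linarith) (by linarith)
        refine le_trans hstep ?_
        rcases le_total (|t - (j:ℕ)|) (|t' - (j:ℕ)|) with h | h
        · have : u = |t - (j:ℕ)| := min_eq_left h
          rw [this]
          have : (0:ℝ) ≤ 2/(|t' - (j:ℕ)| + 1) := by positivity
          linarith
        · have : u = |t' - (j:ℕ)| := min_eq_right h
          rw [this]
          have : (0:ℝ) ≤ 2/(|t - (j:ℕ)| + 1) := by positivity
          linarith
      calc ∑ j, ‖c j‖
          ≤ ∑ j : Fin K, (2/(|t - (j:ℕ)| + 1) + 2/(|t' - (j:ℕ)| + 1)) :=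
            Finset.sum_le_sum fun j _ => hkeyj j
        _ = 2 * (∑ j ∈ range K, 1/(|t - (j:ℝ)| + 1)) + 2 * (∑ j ∈ range K, 1/(|t' - (j:ℝ)| + 1)) := by
            rw [Finset.sum_add_distrib, Finset.mul_sum, Finset.mul_sum,
              ← Fin.sum_univ_eq_sum_range (fun j => 2 * (1/(|t - (j:ℝ)| + 1))),
              ← Fin.sum_univ_eq_sum_range (fun j => 2 * (1/(|t' - (j:ℝ)| + 1)))]
            congr 1 <;> exact Finset.sum_congr rfl fun j _ => by ring
        _ ≤ 2 * (3 + 2*Real.log K) + 2 * (3 + 2*Real.log K) := by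
            have h1 := sumA K (by omega) t
            have h2 := sumA K (by omega) t'
            linarith
        _ ≤ 30 * Real.log K := by linarith
    · -- small |z| case
      push_neg at hr
      have hsmall : ∀ j : Fin K, ‖c j‖ ≤ 4 / K := by
        intro j
        have hB : (1:ℝ)/2 ≤ ‖1 - w (j:ℕ)‖ := by
          have h1 : (1:ℝ) - ‖w (j:ℕ)‖ ≤ ‖1 - w (j:ℕ)‖ := by
            calc (1:ℝ) - ‖w (j:ℕ)‖ = ‖(1:ℂ)‖ - ‖w (j:ℕ)‖ := by rw [norm_one]
              _ ≤ ‖1 - w (j:ℕ)‖ := norm_sub_norm_le _ _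
          rw [hwabs] at h1
          linarith
        have hwne : w (j:ℕ) ≠ 1 := by
          intro h
          rw [h, sub_self, norm_zero] at hB
          linarith
        refine le_trans (habs2 j hwne) ?_
        rw [div_le_div_iff₀ (by positivity) hKpos]
        nlinarith
      have hsum : ∑ j, ‖c j‖ ≤ (K:ℝ) * (4/(K:ℝ)) := by
        have h := Finset.sum_le_card_nsmul Finset.univ (fun j => ‖c j‖) (4/(K:ℝ))
          (fun j _ => hsmall j)
        simpa [Finset.card_univ, nsmul_eq_mul] using h
      have h4 : (K:ℝ) * (4/(K:ℝ)) = 4 := by field_simp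
      rw [h4] at hsum
      linarith
  · -- closed form
    intro j hj
    have hwj : w (j:ℕ) ≠ 1 := hj
    rw [hcw j, hgeom _ hwj]
    have h1 : (1:ℂ) - w (j:ℕ) ≠ 0 := sub_ne_zero.mpr (Ne.symm hwj)
    rw [hw] at h1 ⊢
    field_simp
end

section
/- Let K ≥ 2 and let y_0, …, y_{K−1} ∈ 𝔻 be distinct points with min_{j≠k} |y_j − y_k| ≥ η > 0. Then there exists a real number D with 1 < D ≤ 4K(2/η)^{K−1} + 1, depending only on K and η, such that for every x ∈ 𝔻 there is a probability distribution of a pair of random variables (R, W) with R taking values in {1, −1, i, −i} and W taking values in {y_0, …, y_{K−1}}, satisfying E[R · W^α] = x^α / D for every integer 0 ≤ α ≤ K−1 (with the convention 0^0 = 1; in particular, the case α = 0 gives E[R] = 1/D). -/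
open Finset

lemma aux_decomp (z : ℂ) :
    ((max z.re 0 : ℝ) : ℂ) * 1 + ((max (-z.re) 0 : ℝ) : ℂ) * (-1)
      + ((max z.im 0 : ℝ) : ℂ) * Complex.I + ((max (-z.im) 0 : ℝ) : ℂ) * (-Complex.I) = z := by
  have h1 : max z.re 0 - max (-z.re) 0 = z.re := max_zero_sub_max_neg_zero_eq_self _
  have h2 : max z.im 0 - max (-z.im) 0 = z.im := max_zero_sub_max_neg_zero_eq_self _
  have : ((max z.re 0 - max (-z.re) 0 : ℝ) : ℂ) + ((max z.im 0 - max (-z.im) 0 : ℝ) : ℂ) * Complex.I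
      = ((max z.re 0 : ℝ) : ℂ) * 1 + ((max (-z.re) 0 : ℝ) : ℂ) * (-1)
      + ((max z.im 0 : ℝ) : ℂ) * Complex.I + ((max (-z.im) 0 : ℝ) : ℂ) * (-Complex.I) := by
    push_cast; ring
  rw [← this, h1, h2, Complex.re_add_im]

/-- One-coordinate probabilistic interpolation (equations (3.9)/(3.10)): given `K ≥ 2`
distinct points `y₀, …, y_{K−1} ∈ 𝔻` with pairwise distances at least `η > 0`, there
is `1 < D ≤ 4K(2/η)^{K−1} + 1` (depending only on `K` and `η`) such that for every
`x ∈ 𝔻` there is a joint distribution of `(R, W)`, with `R ∈ {1, −1, i, −i}` and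
`W ∈ {y₀, …, y_{K−1}}`, satisfying `E[R W^α] = x^α / D` for all `0 ≤ α ≤ K−1`.
The distribution is given by nonnegative weights `p` on `Fin 4 × Fin K` summing to `1`,
with `R` the value `![1, -1, I, -I]` at the first index and `W = y` at the second. -/
theorem stmt12 (K : ℕ) (hK : 2 ≤ K) (η : ℝ) (hη : 0 < η)
    (y : Fin K → ℂ) (hy : ∀ k, ‖y k‖ ≤ 1)
    (hsep : ∀ j k, j ≠ k → η ≤ ‖y j - y k‖) :
    ∃ D : ℝ, 1 < D ∧ D ≤ 4 * (K : ℝ) * (2 / η) ^ (K - 1) + 1 ∧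
      ∀ x : ℂ, ‖x‖ ≤ 1 →
      ∃ p : Fin 4 × Fin K → ℝ,
        (∀ q, 0 ≤ p q) ∧ (∑ q, p q = 1) ∧
        ∀ α : ℕ, α ≤ K - 1 →
          ∑ q, (p q : ℂ) * (![1, -1, Complex.I, -Complex.I] q.1) * y q.2 ^ α
            = x ^ α / (D : ℂ) := by
  have hK0 : (0:ℝ) < K := by positivity
  set T : ℝ := (2 / η) ^ (K - 1) with hT
  have hTpos : 0 < T := by positivity
  set D : ℝ := 4 * K * T + 1 with hD
  have hD1 : 1 < D := by nlinarith
  have hDpos : 0 < D := by linarith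
  have hDne : (D : ℂ) ≠ 0 := by exact_mod_cast ne_of_gt hDpos
  refine ⟨D, hD1, le_refl _, ?_⟩
  intro x hx
  have hinj : Set.InjOn y (↑(univ : Finset (Fin K))) := by
    intro j _ k _ h
    by_contra hne
    have h2 := hsep j k hne
    rw [h, sub_self, norm_zero] at h2
    linarith
  set c : Fin K → ℂ := fun k => (Lagrange.basis Finset.univ y k).eval x with hc
  -- Lagrange identity
  have hident : ∀ α : ℕ, α ≤ K - 1 → ∑ k, c k * y k ^ α = x ^ α := by
    intro α hα
    have hdeg : (Polynomial.X ^ α : Polynomial ℂ).degree < ((univ : Finset (Fin K)).card : ℕ) := by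
      rw [Polynomial.degree_X_pow, card_univ, Fintype.card_fin]
      exact_mod_cast Nat.lt_of_le_of_lt hα (by omega)
    have heq := Lagrange.eq_interpolate hinj hdeg
    have h2 := congrArg (Polynomial.eval x) heq
    rw [Polynomial.eval_pow, Polynomial.eval_X, Lagrange.interpolate_apply,
      Polynomial.eval_finset_sum] at h2
    simp only [Polynomial.eval_mul, Polynomial.eval_C, Polynomial.eval_pow,
      Polynomial.eval_X] at h2
    rw [h2]
    exact Finset.sum_congr rfl fun k _ => by ring
  -- bound on the coefficients
  have hcb : ∀ k, ‖c k‖ ≤ T := by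
    intro k
    rw [hc]
    simp only [Lagrange.basis, Polynomial.eval_prod, norm_prod]
    calc ∏ j ∈ univ.erase k, ‖(Lagrange.basisDivisor (y k) (y j)).eval x‖
        ≤ ∏ _j ∈ univ.erase k, (2 / η) := by
          apply Finset.prod_le_prod (fun _ _ => norm_nonneg _)
          intro j hj
          have hne : k ≠ j := ((Finset.mem_erase.mp hj).1).symm
          rw [Lagrange.basisDivisor, Polynomial.eval_mul, Polynomial.eval_C, Polynomial.eval_sub,
            Polynomial.eval_X, Polynomial.eval_C, norm_mul, norm_inv]
          have h1 : ‖x - y j‖ ≤ 2 := by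
            calc ‖x - y j‖ ≤ ‖x‖ + ‖y j‖ :=
              norm_sub_le _ _
            _ ≤ 2 := by linarith [hy j]
          have h2 : η ≤ ‖y k - y j‖ := hsep k j hne
          rw [inv_mul_eq_div]
          exact div_le_div₀ (by norm_num) h1 hη h2
      _ = T := by
          rw [Finset.prod_const, Finset.card_erase_of_mem (mem_univ k), card_univ,
            Fintype.card_fin]
  set S : ℝ := ∑ k, (|(c k).re| + |(c k).im|) with hS
  have hSb : S ≤ 2 * K * T := by
    calc S ≤ ∑ _k : Fin K, 2 * T := by
          apply Finset.sum_le_sum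
          intro k _
          have h1 := Complex.abs_re_le_norm (c k)
          have h2 := Complex.abs_im_le_norm (c k)
          have h3 := hcb k
          linarith
      _ = 2 * K * T := by rw [Finset.sum_const, card_univ, Fintype.card_fin]; push_cast; ring
  set w : ℝ := 1 - S / D with hw
  have hw0 : 0 ≤ w := by
    rw [hw, sub_nonneg, div_le_one hDpos]
    nlinarith
  set v : Fin 4 → ℂ → ℝ :=
    ![fun z => max z.re 0, fun z => max (-z.re) 0, fun z => max z.im 0, fun z => max (-z.im) 0]
    with hv
  have hvnn : ∀ r z, 0 ≤ v r z := by
    intro r z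
    fin_cases r <;> simp [hv]
  set k0 : Fin K := ⟨0, by omega⟩ with hk0
  refine ⟨fun q => v q.1 (c q.2) / D + ((if q = (0, k0) then w / 2 else 0)
      + (if q = (1, k0) then w / 2 else 0)), ?_, ?_, ?_⟩
  · intro q
    have := hvnn q.1 (c q.2)
    have h1 : (0:ℝ) ≤ if q = ((0:Fin 4), k0) then w / 2 else 0 := by positivity
    have h2 : (0:ℝ) ≤ if q = ((1:Fin 4), k0) then w / 2 else 0 := by positivity
    have h3 : 0 ≤ v q.1 (c q.2) / D := by positivity
    linarith
  · rw [Finset.sum_add_distrib, Finset.sum_add_distrib]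
    have e1 : ∑ q : Fin 4 × Fin K, (if q = ((0:Fin 4), k0) then w / 2 else 0) = w / 2 := by
      rw [Finset.sum_ite_eq' univ ((0:Fin 4), k0) (fun _ => w / 2)]
      simp
    have e2 : ∑ q : Fin 4 × Fin K, (if q = ((1:Fin 4), k0) then w / 2 else 0) = w / 2 := by
      rw [Finset.sum_ite_eq' univ ((1:Fin 4), k0) (fun _ => w / 2)]
      simp
    have e3 : ∑ q : Fin 4 × Fin K, v q.1 (c q.2) / D = S / D := by
      rw [Fintype.sum_prod_type_right]
      rw [hS, Finset.sum_div]
      apply Finset.sum_congr rfl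
      intro k _
      rw [Fin.sum_univ_four]
      simp only [hv, Matrix.cons_val_zero, Matrix.cons_val_one, Matrix.head_cons,
        Matrix.cons_val_two, Matrix.tail_cons, Matrix.cons_val_three]
      have ha := max_zero_add_max_neg_zero_eq_abs_self (c k).re
      have hb := max_zero_add_max_neg_zero_eq_abs_self (c k).im
      field_simp
      linarith
    rw [e1, e2, e3, hw]
    ring
  · intro α hα
    have key : ∀ q : Fin 4 × Fin K,
        ((v q.1 (c q.2) / D + ((if q = ((0:Fin 4), k0) then w / 2 else 0)
          + (if q = ((1:Fin 4), k0) then w / 2 else 0)) : ℝ) : ℂ)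
          * (![1, -1, Complex.I, -Complex.I] q.1) * y q.2 ^ α
        = ((v q.1 (c q.2) : ℝ) : ℂ) / D * (![1, -1, Complex.I, -Complex.I] q.1) * y q.2 ^ α
          + ((if q = ((0:Fin 4), k0) then ((w:ℂ) / 2) else 0)
            * (![1, -1, Complex.I, -Complex.I] q.1) * y q.2 ^ α
          + (if q = ((1:Fin 4), k0) then ((w:ℂ) / 2) else 0)
            * (![1, -1, Complex.I, -Complex.I] q.1) * y q.2 ^ α) := by
      intro q
      simp only [Complex.ofReal_add, Complex.ofReal_div, apply_ite Complex.ofReal,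
        Complex.ofReal_ofNat, Complex.ofReal_zero]
      ring
    rw [Finset.sum_congr rfl (fun q _ => key q), Finset.sum_add_distrib, Finset.sum_add_distrib]
    have e1 : ∑ q : Fin 4 × Fin K, (if q = ((0:Fin 4), k0) then ((w:ℂ) / 2) else 0)
        * (![1, -1, Complex.I, -Complex.I] q.1) * y q.2 ^ α
        = (w:ℂ) / 2 * 1 * y k0 ^ α := by
      have hq : ∀ q : Fin 4 × Fin K,
          (if q = ((0:Fin 4), k0) then ((w:ℂ) / 2) else 0)
            * (![1, -1, Complex.I, -Complex.I] q.1) * y q.2 ^ α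
          = if q = ((0:Fin 4), k0) then (w:ℂ) / 2 * 1 * y k0 ^ α else 0 := by
        intro q
        split_ifs with h
        · subst h; simp
        · ring
      rw [Finset.sum_congr rfl fun q _ => hq q,
        Finset.sum_ite_eq' univ ((0:Fin 4), k0) (fun _ => (w:ℂ) / 2 * 1 * y k0 ^ α)]
      simp
    have e2 : ∑ q : Fin 4 × Fin K, (if q = ((1:Fin 4), k0) then ((w:ℂ) / 2) else 0)
        * (![1, -1, Complex.I, -Complex.I] q.1) * y q.2 ^ α
        = (w:ℂ) / 2 * (-1) * y k0 ^ α := by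
      have hq : ∀ q : Fin 4 × Fin K,
          (if q = ((1:Fin 4), k0) then ((w:ℂ) / 2) else 0)
            * (![1, -1, Complex.I, -Complex.I] q.1) * y q.2 ^ α
          = if q = ((1:Fin 4), k0) then (w:ℂ) / 2 * (-1) * y k0 ^ α else 0 := by
        intro q
        split_ifs with h
        · subst h; simp
        · ring
      rw [Finset.sum_congr rfl fun q _ => hq q,
        Finset.sum_ite_eq' univ ((1:Fin 4), k0) (fun _ => (w:ℂ) / 2 * (-1) * y k0 ^ α)]
      simp
    have e3 : ∑ q : Fin 4 × Fin K, ((v q.1 (c q.2) : ℝ) : ℂ) / D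
        * (![1, -1, Complex.I, -Complex.I] q.1) * y q.2 ^ α = x ^ α / D := by
      rw [Fintype.sum_prod_type_right]
      have inner : ∀ k : Fin K, ∑ r : Fin 4, ((v r (c k) : ℝ) : ℂ) / D
          * (![1, -1, Complex.I, -Complex.I] r) * y k ^ α
          = c k / D * y k ^ α := by
        intro k
        rw [Fin.sum_univ_four]
        simp only [hv, Matrix.cons_val_zero, Matrix.cons_val_one, Matrix.head_cons,
          Matrix.cons_val_two, Matrix.tail_cons, Matrix.cons_val_three]
        rw [show ∀ a b d e : ℂ, a / (D:ℂ) * 1 * y k ^ α + b / D * (-1) * y k ^ α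
            + d / D * Complex.I * y k ^ α + e / D * (-Complex.I) * y k ^ α
            = (a * 1 + b * (-1) + d * Complex.I + e * (-Complex.I)) / D * y k ^ α
          from fun a b d e => by ring]
        rw [aux_decomp (c k)]
      rw [Finset.sum_congr rfl (fun k _ => inner k)]
      rw [show ∑ k, c k / (D:ℂ) * y k ^ α = (∑ k, c k * y k ^ α) / D by
        rw [Finset.sum_div]; exact Finset.sum_congr rfl fun k _ => by ring]
      rw [hident α hα]
    rw [e1, e2, e3]
    ring
end
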